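/- Under the mixture model with coordinate-wise independent sources, for any two observation indices l ≠ n, the variance of the normalized correlation satisfies Var[(1/D) Σ_{k=1}^D a_l(k) a_n(k)] = (1/D²) Σ_{k=1}^D Σ_{i=1}^J Σ_{j=1}^J p_i(l) p_j(n) E[h_i(k)² h_j(k)²] − (1/D) (Σ_{j=1}^J p_j(l) p_j(n))². -/

import Mathlib

/-!
Write `X k = a_l(k) a_n(k)`. The data of coordinate `k` (indicators at `(l, k)` and `(n, k)`, and
the sources at `k`) are independent across coordinates, so the `X k` are pairwise independent and
the variance of their mean is `D⁻²` times the sum of their variances. For a single coordinate, the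
indicator vectors are one-hot, so `X k ^ 2 = (Σ I_i(l) h_i²)(Σ I_j(n) h_j²)`. Since the indicators
are independent of the sources and `I(l, k)` is independent of `I(n, k)`, both moments of `X k`
factor into `p_i(l) p_j(n)` times a moment of the sources, and orthonormality of the sources
reduces the first moment to `Σ_j p_j(l) p_j(n)`.
-/

open MeasureTheory ProbabilityTheory Matrix

theorem MeasureTheory.measurePreserving_prodProdProdComm {α β γ δ : Type*}
    [MeasurableSpace α] [MeasurableSpace β] [MeasurableSpace γ] [MeasurableSpace δ]
    (μa : Measure α) (μb : Measure β) (μc : Measure γ) (μd : Measure δ)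
    [SFinite μa] [SFinite μb] [SFinite μc] [SFinite μd] :
    MeasurePreserving (fun x : (α × β) × γ × δ => ((x.1.1, x.2.1), (x.1.2, x.2.2)))
      ((μa.prod μb).prod (μc.prod μd)) ((μa.prod μc).prod (μb.prod μd)) := by
  have := (measurePreserving_prodAssoc μa μc (μb.prod μd)).symm.comp <|
    ((MeasurePreserving.id μa).prod <|
      ((measurePreserving_prodAssoc μc μb μd).comp
        ((Measure.measurePreserving_swap (μ := μb) (ν := μc)).prod (MeasurePreserving.id μd))).comp
        (measurePreserving_prodAssoc μb μc μd).symm).comp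
      (measurePreserving_prodAssoc μa μb (μc.prod μd))
  exact this

theorem MeasureTheory.memLp_of_integrable_abs_pow {α : Type*} [MeasurableSpace α] {μ : Measure α}
    {f : α → ℝ} (hf : AEStronglyMeasurable f μ) {n : ℕ} (hn : n ≠ 0)
    (hint : Integrable (fun x => |f x| ^ n) μ) : MemLp f n μ :=
  (integrable_norm_rpow_iff hf (by exact_mod_cast hn) (by simp)).1 (by simpa using hint)

instance : ENNReal.HolderTriple 4 4 2 :=
  ⟨by rw [← ENNReal.add_halves (2 : ENNReal)⁻¹]; congr 1 <;>
    rw [div_eq_mul_inv, ← ENNReal.mul_inv (by simp) (by simp)] <;> norm_num⟩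

namespace ProbabilityTheory

variable {Ω : Type*} [MeasurableSpace Ω] {μ : Measure Ω}

/-- The law of `((X, X'), (Y, Y'))` is `law X ⊗ law X' ⊗ law Y ⊗ law Y'`; regrouping the factors
gives the law of `((X, Y), (X', Y'))`. -/
theorem IndepFun.prodMk_prodMk [IsFiniteMeasure μ] {α α' β β' : Type*}
    [MeasurableSpace α] [MeasurableSpace α'] [MeasurableSpace β] [MeasurableSpace β']
    {X : Ω → α} {X' : Ω → α'} {Y : Ω → β} {Y' : Ω → β'}
    (hXm : Measurable X) (hX'm : Measurable X') (hYm : Measurable Y) (hY'm : Measurable Y')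
    (h : IndepFun (fun ω => (X ω, X' ω)) (fun ω => (Y ω, Y' ω)) μ)
    (hX : IndepFun X X' μ) (hY : IndepFun Y Y' μ) :
    IndepFun (fun ω => (X ω, Y ω)) (fun ω => (X' ω, Y' ω)) μ := by
  have hXY := (h.comp measurable_fst measurable_fst).map_prod_eq_prod_map_map
    hXm.aemeasurable hYm.aemeasurable
  have hXY' := (h.comp measurable_snd measurable_snd).map_prod_eq_prod_map_map
    hX'm.aemeasurable hY'm.aemeasurable
  rw [indepFun_iff_map_prod_eq_prod_map_map (by fun_prop) (by fun_prop), hXY, hXY',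
    ← (measurePreserving_prodProdProdComm _ _ _ _).map_eq,
    ← hX.map_prod_eq_prod_map_map hXm.aemeasurable hX'm.aemeasurable,
    ← hY.map_prod_eq_prod_map_map hYm.aemeasurable hY'm.aemeasurable,
    ← h.map_prod_eq_prod_map_map (by fun_prop) (by fun_prop),
    Measure.map_map (by fun_prop) (by fun_prop)]
  rfl

theorem IndepFun.integral_mul_mul {A B C : Ω → ℝ} (hA : Measurable A) (hB : Measurable B)
    (hC : Measurable C) (hAB : IndepFun A B μ) (hABC : IndepFun (fun ω => (A ω, B ω)) C μ) :
    ∫ ω, A ω * B ω * C ω ∂μ = (∫ ω, A ω ∂μ) * (∫ ω, B ω ∂μ) * ∫ ω, C ω ∂μ := by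
  calc ∫ ω, A ω * B ω * C ω ∂μ = (∫ ω, A ω * B ω ∂μ) * ∫ ω, C ω ∂μ :=
        (hABC.comp measurable_mul measurable_id).integral_fun_mul_eq_mul_integral
          (hA.mul hB).aestronglyMeasurable hC.aestronglyMeasurable
    _ = _ := by
        rw [hAB.integral_fun_mul_eq_mul_integral hA.aestronglyMeasurable hB.aestronglyMeasurable]

end ProbabilityTheory

def IsOneHot {ι : Type*} [DecidableEq ι] (w : ι → ℝ) : Prop := ∃ i, w = Pi.single i 1

namespace IsOneHot

variable {ι : Type*} [DecidableEq ι] {w : ι → ℝ}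

theorem of_sum_eq_one [Fintype ι] (h01 : ∀ i, w i = 0 ∨ w i = 1) (hsum : ∑ i, w i = 1) :
    IsOneHot w := by
  obtain ⟨j, hj⟩ : ∃ j, w j = 1 := by
    by_contra! hne
    simp [fun i => (h01 i).resolve_right (hne i)] at hsum
  refine ⟨j, funext fun i => ?_⟩
  rcases eq_or_ne i j with rfl | hij
  · simp [hj]
  rw [Pi.single_eq_of_ne hij]
  refine (h01 i).resolve_right fun hi => ?_
  have := Finset.sum_le_sum_of_subset_of_nonneg (Finset.subset_univ {i, j})
    fun k _ _ => (h01 k).elim (·.ge) (fun h => h ▸ zero_le_one)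
  rw [Finset.sum_pair hij, hi, hj, hsum] at this
  norm_num at this

theorem abs_le_one (hw : IsOneHot w) (i : ι) : |w i| ≤ 1 := by
  obtain ⟨j, rfl⟩ := hw
  rcases eq_or_ne i j with rfl | hij <;> simp [*]

theorem sq_dotProduct [Fintype ι] (hw : IsOneHot w) (v : ι → ℝ) :
    (w ⬝ᵥ v) ^ 2 = w ⬝ᵥ v ^ 2 := by
  obtain ⟨j, rfl⟩ := hw
  simp

end IsOneHot

theorem Matrix.dotProduct_mul_dotProduct_eq_sum {ι R : Type*} [Fintype ι] [CommSemiring R]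
    (u v g : ι → R) : (u ⬝ᵥ g) * (v ⬝ᵥ g) = ∑ i, ∑ j, u i * v j * (g i * g j) := by
  simp only [dotProduct, Finset.sum_mul_sum]
  exact Finset.sum_congr rfl fun i _ => Finset.sum_congr rfl fun j _ => by ring

section DotProduct

variable {Ω ι : Type*} [MeasurableSpace Ω] {μ : Measure Ω} {U V G : Ω → ι → ℝ}

theorem integrable_apply_mul_apply_mul (hU : Measurable U) (hV : Measurable V)
    (hUb : ∀ ω i, |U ω i| ≤ 1) (hVb : ∀ ω i, |V ω i| ≤ 1)
    (hG : ∀ i j, Integrable (fun ω => G ω i * G ω j) μ) (i j : ι) :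
    Integrable (fun ω => U ω i * V ω j * (G ω i * G ω j)) μ := by
  refine (hG i j).bdd_mul (c := 1) (by fun_prop) (ae_of_all _ fun ω => ?_)
  rw [Real.norm_eq_abs, abs_mul]
  exact mul_le_one₀ (hUb ω i) (abs_nonneg _) (hVb ω j)

theorem integrable_dotProduct_mul_dotProduct [Fintype ι] (hU : Measurable U) (hV : Measurable V)
    (hUb : ∀ ω i, |U ω i| ≤ 1) (hVb : ∀ ω i, |V ω i| ≤ 1)
    (hG : ∀ i j, Integrable (fun ω => G ω i * G ω j) μ) :
    Integrable (fun ω => (U ω ⬝ᵥ G ω) * (V ω ⬝ᵥ G ω)) μ := by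
  simp_rw [dotProduct_mul_dotProduct_eq_sum]
  exact integrable_finsetSum _ fun i _ => integrable_finsetSum _ fun j _ =>
    integrable_apply_mul_apply_mul hU hV hUb hVb hG i j

theorem integral_dotProduct_mul_dotProduct [Fintype ι] (hU : Measurable U) (hV : Measurable V)
    (hG : Measurable G) (hUV : IndepFun U V μ) (hUVG : IndepFun (fun ω => (U ω, V ω)) G μ)
    (hUb : ∀ ω i, |U ω i| ≤ 1) (hVb : ∀ ω i, |V ω i| ≤ 1)
    (hGint : ∀ i j, Integrable (fun ω => G ω i * G ω j) μ) :
    ∫ ω, (U ω ⬝ᵥ G ω) * (V ω ⬝ᵥ G ω) ∂μ =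
      ∑ i, ∑ j, (∫ ω, U ω i ∂μ) * (∫ ω, V ω j ∂μ) * ∫ ω, G ω i * G ω j ∂μ := by
  have hterm := integrable_apply_mul_apply_mul hU hV hUb hVb hGint
  simp_rw [dotProduct_mul_dotProduct_eq_sum]
  rw [integral_finsetSum _ fun i _ => integrable_finsetSum _ fun j _ => hterm i j]
  refine Finset.sum_congr rfl fun i _ => ?_
  rw [integral_finsetSum _ fun j _ => hterm i j]
  refine Finset.sum_congr rfl fun j _ => ?_
  exact IndepFun.integral_mul_mul (A := fun ω => U ω i) (B := fun ω => V ω j)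
    (by fun_prop) (by fun_prop) (by fun_prop)
    (hUV.comp (measurable_pi_apply i) (measurable_pi_apply j))
    (hUVG.comp (φ := fun p : (ι → ℝ) × (ι → ℝ) => (p.1 i, p.2 j))
      (ψ := fun g : ι → ℝ => g i * g j) (by fun_prop) (by fun_prop))

variable [Fintype ι] [DecidableEq ι] {H : Ω → ι → ℝ}

theorem memLp_two_dotProduct_mul_dotProduct (hU : Measurable U) (hV : Measurable V)
    (hH : Measurable H) (hU1 : ∀ ω, IsOneHot (U ω)) (hV1 : ∀ ω, IsOneHot (V ω))
    (hH2 : ∀ i j, MemLp (fun ω => H ω i * H ω j) 2 μ) :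
    MemLp (fun ω => (U ω ⬝ᵥ H ω) * (V ω ⬝ᵥ H ω)) 2 μ := by
  refine (memLp_two_iff_integrable_sq (by fun_prop)).2 ?_
  simp_rw [mul_pow, (hU1 _).sq_dotProduct, (hV1 _).sq_dotProduct]
  exact integrable_dotProduct_mul_dotProduct hU hV (fun ω => (hU1 ω).abs_le_one)
    (fun ω => (hV1 ω).abs_le_one) fun i j => by simpa [mul_pow] using (hH2 i j).integrable_sq

theorem variance_dotProduct_mul_dotProduct [IsProbabilityMeasure μ] (hU : Measurable U)
    (hV : Measurable V) (hH : Measurable H) (hUV : IndepFun U V μ)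
    (hUVH : IndepFun (fun ω => (U ω, V ω)) H μ)
    (hU1 : ∀ ω, IsOneHot (U ω)) (hV1 : ∀ ω, IsOneHot (V ω))
    (hH2 : ∀ i j, MemLp (fun ω => H ω i * H ω j) 2 μ) :
    variance (fun ω => (U ω ⬝ᵥ H ω) * (V ω ⬝ᵥ H ω)) μ =
      ∑ i, ∑ j, (∫ ω, U ω i ∂μ) * (∫ ω, V ω j ∂μ) * ∫ ω, H ω i ^ 2 * H ω j ^ 2 ∂μ
        - (∑ i, ∑ j, (∫ ω, U ω i ∂μ) * (∫ ω, V ω j ∂μ) * ∫ ω, H ω i * H ω j ∂μ) ^ 2 := by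
  have hUb := fun ω => (hU1 ω).abs_le_one
  have hVb := fun ω => (hV1 ω).abs_le_one
  rw [variance_eq_sub (memLp_two_dotProduct_mul_dotProduct hU hV hH hU1 hV1 hH2),
    integral_dotProduct_mul_dotProduct hU hV hH hUV hUVH hUb hVb
      fun i j => (hH2 i j).integrable one_le_two]
  congr 1
  simp_rw [Pi.pow_apply, mul_pow, (hU1 _).sq_dotProduct, (hV1 _).sq_dotProduct]
  rw [integral_dotProduct_mul_dotProduct (G := fun ω => H ω ^ 2) hU hV (by fun_prop) hUV
    (hUVH.comp (ψ := fun v : ι → ℝ => v ^ 2) measurable_id (by fun_prop)) hUb hVb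
    fun i j => by simpa [mul_pow] using (hH2 i j).integrable_sq]
  simp

end DotProduct

section MixtureModel

variable {Ω : Type*} {J L D : ℕ}
  {h : Fin J → Fin D → Ω → ℝ} {I : Fin J → Fin L → Fin D → Ω → ℝ} {a : Fin L → Fin D → Ω → ℝ}

theorem observation_mul_eq_dotProduct_mul_dotProduct
    (ha : ∀ l k ω, a l k ω = ∑ j, I j l k ω * h j k ω) (l n : Fin L) (k : Fin D) :
    (fun ω => a l k ω * a n k ω) = fun ω =>
      ((fun j => I j l k ω) ⬝ᵥ fun j => h j k ω) * ((fun j => I j n k ω) ⬝ᵥ fun j => h j k ω) := by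
  simp [ha, dotProduct]

variable [MeasurableSpace Ω] {μ : Measure Ω}

theorem memLp_two_observation_mul (hmeas : ∀ j k, Measurable (h j k))
    (hImeas : ∀ j l k, Measurable (I j l k)) (hI1 : ∀ l k ω, IsOneHot fun j => I j l k ω)
    (hh2 : ∀ i j k, MemLp (fun ω => h i k ω * h j k ω) 2 μ)
    (ha : ∀ l k ω, a l k ω = ∑ j, I j l k ω * h j k ω) (l n : Fin L) (k : Fin D) :
    MemLp (fun ω => a l k ω * a n k ω) 2 μ := by
  rw [observation_mul_eq_dotProduct_mul_dotProduct ha]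
  exact memLp_two_dotProduct_mul_dotProduct (by fun_prop) (by fun_prop) (by fun_prop)
    (hI1 l k) (hI1 n k) fun i j => hh2 i j k

theorem variance_observation_mul [IsProbabilityMeasure μ] (hmeas : ∀ j k, Measurable (h j k))
    (hImeas : ∀ j l k, Measurable (I j l k)) (hI1 : ∀ l k ω, IsOneHot fun j => I j l k ω)
    (hh2 : ∀ i j k, MemLp (fun ω => h i k ω * h j k ω) 2 μ)
    (hcorr : ∀ i j k, ∫ ω, h i k ω * h j k ω ∂μ = if i = j then 1 else 0)
    {p : Fin J → Fin L → ℝ} (hEI : ∀ j l k, ∫ ω, I j l k ω ∂μ = p j l)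
    (hIndepI : iIndepFun (fun (lk : Fin L × Fin D) ω => fun j => I j lk.1 lk.2 ω) μ)
    (hIndepIh : IndepFun (fun ω => fun jlk : Fin J × Fin L × Fin D => I jlk.1 jlk.2.1 jlk.2.2 ω)
      (fun ω => fun jk : Fin J × Fin D => h jk.1 jk.2 ω) μ)
    (ha : ∀ l k ω, a l k ω = ∑ j, I j l k ω * h j k ω) {l n : Fin L} (hln : l ≠ n) (k : Fin D) :
    variance (fun ω => a l k ω * a n k ω) μ =
      ∑ i, ∑ j, p i l * p j n * ∫ ω, h i k ω ^ 2 * h j k ω ^ 2 ∂μ - (∑ j, p j l * p j n) ^ 2 := by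
  have hUV : IndepFun (fun ω j => I j l k ω) (fun ω j => I j n k ω) μ :=
    hIndepI.indepFun (i := (l, k)) (j := (n, k)) (by simp [hln])
  have hUVH : IndepFun (fun ω => (fun j => I j l k ω, fun j => I j n k ω)) (fun ω j => h j k ω) μ :=
    hIndepIh.comp (φ := fun v => (fun j => v (j, l, k), fun j => v (j, n, k)))
      (ψ := fun w j => w (j, k)) (by fun_prop) (by fun_prop)
  rw [observation_mul_eq_dotProduct_mul_dotProduct ha, variance_dotProduct_mul_dotProduct
    (by fun_prop) (by fun_prop) (by fun_prop) hUV hUVH (hI1 l k) (hI1 n k) fun i j => hh2 i j k]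
  simp [hEI, hcorr]

theorem indepFun_observation_mul_of_ne [IsFiniteMeasure μ] (hmeas : ∀ j k, Measurable (h j k))
    (hImeas : ∀ j l k, Measurable (I j l k))
    (hIndepI : iIndepFun (fun (lk : Fin L × Fin D) ω => fun j => I j lk.1 lk.2 ω) μ)
    (hIndepIh : IndepFun (fun ω => fun jlk : Fin J × Fin L × Fin D => I jlk.1 jlk.2.1 jlk.2.2 ω)
      (fun ω => fun jk : Fin J × Fin D => h jk.1 jk.2 ω) μ)
    (hIndeph : iIndepFun (fun (k : Fin D) ω => fun j => h j k ω) μ)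
    (ha : ∀ l k ω, a l k ω = ∑ j, I j l k ω * h j k ω) (l n : Fin L) {k k' : Fin D}
    (hkk' : k ≠ k') :
    IndepFun (fun ω => a l k ω * a n k ω) (fun ω => a l k' ω * a n k' ω) μ := by
  let UV (k : Fin D) (ω : Ω) := (fun j => I j l k ω, fun j => I j n k ω)
  let H (k : Fin D) (ω : Ω) (j : Fin J) := h j k ω
  have hUV : IndepFun (UV k) (UV k') μ :=
    hIndepI.indepFun_prodMk_prodMk (fun _ => by fun_prop) (l, k) (n, k) (l, k') (n, k')
      (by simp [hkk']) (by simp [hkk']) (by simp [hkk']) (by simp [hkk'])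
  have hUVH : IndepFun (fun ω => (UV k ω, UV k' ω)) (fun ω => (H k ω, H k' ω)) μ :=
    hIndepIh.comp
      (φ := fun v => ((fun j => v (j, l, k), fun j => v (j, n, k)),
        (fun j => v (j, l, k'), fun j => v (j, n, k'))))
      (ψ := fun w => (fun j => w (j, k), fun j => w (j, k'))) (by fun_prop) (by fun_prop)
  simp only [observation_mul_eq_dotProduct_mul_dotProduct ha]
  exact (hUVH.prodMk_prodMk (by fun_prop) (by fun_prop) (by fun_prop) (by fun_prop) hUV
    (hIndeph.indepFun hkk')).comp
    (φ := fun x : ((Fin J → ℝ) × (Fin J → ℝ)) × (Fin J → ℝ) => (x.1.1 ⬝ᵥ x.2) * (x.1.2 ⬝ᵥ x.2))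
    (ψ := fun x => (x.1.1 ⬝ᵥ x.2) * (x.1.2 ⬝ᵥ x.2)) (by fun_prop) (by fun_prop)

end MixtureModel

theorem variance_normalized_correlation_general
    {Ω : Type*} [MeasurableSpace Ω] (μ : Measure Ω) [IsProbabilityMeasure μ]
    (J L D : ℕ) (hD : 0 < D)
    -- hidden sources
    (h : Fin J → Fin D → Ω → ℝ)
    (hmeas : ∀ j k, Measurable (h j k))
    -- all moments of the sources are finite
    (hmom : ∀ j k (n : ℕ), Integrable (fun ω => |h j k ω| ^ n) μ)
    -- second-moment structure: E[h_i(k) h_j(k')] = δ_{ij} δ_{kk'}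
    (hcorr : ∀ (i j : Fin J) (k k' : Fin D),
      ∫ ω, h i k ω * h j k' ω ∂μ = if i = j ∧ k = k' then 1 else 0)
    -- indicators
    (I : Fin J → Fin L → Fin D → Ω → ℝ)
    (hImeas : ∀ j l k, Measurable (I j l k))
    (hI01 : ∀ j l k ω, I j l k ω = 0 ∨ I j l k ω = 1)
    (hIsum : ∀ l k ω, ∑ j, I j l k ω = 1)
    -- probabilities
    (p : Fin J → Fin L → ℝ)
    (hEI : ∀ j l k, ∫ ω, I j l k ω ∂μ = p j l)
    -- the indicator families associated with distinct pairs (l,k) are mutually independent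
    (hIndepI : iIndepFun
      (fun (lk : Fin L × Fin D) ω => fun j => I j lk.1 lk.2 ω) μ)
    -- the collection of all indicators is independent of the collection of all sources
    (hIndepIh : IndepFun
      (fun ω => fun jlk : Fin J × Fin L × Fin D => I jlk.1 jlk.2.1 jlk.2.2 ω)
      (fun ω => fun jk : Fin J × Fin D => h jk.1 jk.2 ω) μ)
    -- observations
    (a : Fin L → Fin D → Ω → ℝ)
    (ha : ∀ l k ω, a l k ω = ∑ j, I j l k ω * h j k ω)
    -- coordinate-wise independence of the sources
    (hIndeph : iIndepFun
      (fun (k : Fin D) ω => fun j => h j k ω) μ) :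
    ∀ l n : Fin L, l ≠ n →
      variance (fun ω => (1 / (D : ℝ)) * ∑ k, a l k ω * a n k ω) μ =
        (1 / (D : ℝ) ^ 2) *
            (∑ k, ∑ i, ∑ j, p i l * p j n * ∫ ω, (h i k ω) ^ 2 * (h j k ω) ^ 2 ∂μ)
          - (1 / (D : ℝ)) * (∑ j, p j l * p j n) ^ 2 := by
  intro l n hln
  have hI1 l k ω : IsOneHot fun j => I j l k ω := .of_sum_eq_one (hI01 · l k ω) (hIsum l k ω)
  have hh4 j k : MemLp (h j k) 4 μ :=
    mod_cast memLp_of_integrable_abs_pow (hmeas j k).aestronglyMeasurable four_ne_zero (hmom j k 4)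
  have hh2 i j k : MemLp (fun ω => h i k ω * h j k ω) 2 μ := (hh4 j k).mul' (hh4 i k)
  have hsum : (fun ω => 1 / (D : ℝ) * ∑ k, a l k ω * a n k ω) =
      fun ω => 1 / (D : ℝ) * (∑ k, fun ω => a l k ω * a n k ω) ω := by
    simp
  rw [hsum, variance_const_mul, IndepFun.variance_sum
    (fun k _ => memLp_two_observation_mul hmeas hImeas hI1 hh2 ha l n k)
    (fun k _ k' _ hkk' => indepFun_observation_mul_of_ne hmeas hImeas hIndepI hIndepIh hIndeph ha
      l n hkk')]
  have hcorr' i j k : ∫ ω, h i k ω * h j k ω ∂μ = if i = j then 1 else 0 := by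
    simpa using hcorr i j k k
  have hD0 : (D : ℝ) ≠ 0 := by positivity
  simp only [variance_observation_mul hmeas hImeas hI1 hh2 hcorr' hEI hIndepI hIndepIh ha hln,
    Finset.sum_sub_distrib, Finset.sum_const, Finset.card_univ, Fintype.card_fin, nsmul_eq_mul]
  field_simp

/-- Variance of the normalized correlation for `l ≠ n`. -/
theorem variance_normalized_correlation
    {Ω : Type*} [MeasurableSpace Ω] (μ : Measure Ω) [IsProbabilityMeasure μ]
    (J L D : ℕ) (hJ : 0 < J) (hL : 0 < L) (hD : 0 < D)
    -- hidden sources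
    (h : Fin J → Fin D → Ω → ℝ)
    (hmeas : ∀ j k, Measurable (h j k))
    -- all moments of the sources are finite
    (hmom : ∀ j k (n : ℕ), Integrable (fun ω => |h j k ω| ^ n) μ)
    -- second-moment structure: E[h_i(k) h_j(k')] = δ_{ij} δ_{kk'}
    (hcorr : ∀ (i j : Fin J) (k k' : Fin D),
      ∫ ω, h i k ω * h j k' ω ∂μ = if i = j ∧ k = k' then 1 else 0)
    -- indicators
    (I : Fin J → Fin L → Fin D → Ω → ℝ)
    (hImeas : ∀ j l k, Measurable (I j l k))
    (hI01 : ∀ j l k ω, I j l k ω = 0 ∨ I j l k ω = 1)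
    (hIsum : ∀ l k ω, ∑ j, I j l k ω = 1)
    -- probabilities
    (p : Fin J → Fin L → ℝ)
    (hp0 : ∀ j l, 0 ≤ p j l) (hp1 : ∀ l, ∑ j, p j l = 1)
    (hEI : ∀ j l k, ∫ ω, I j l k ω ∂μ = p j l)
    -- the indicator families associated with distinct pairs (l,k) are mutually independent
    (hIndepI : iIndepFun
      (fun (lk : Fin L × Fin D) ω => fun j => I j lk.1 lk.2 ω) μ)
    -- the collection of all indicators is independent of the collection of all sources
    (hIndepIh : IndepFun
      (fun ω => fun jlk : Fin J × Fin L × Fin D => I jlk.1 jlk.2.1 jlk.2.2 ω)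
      (fun ω => fun jk : Fin J × Fin D => h jk.1 jk.2 ω) μ)
    -- observations
    (a : Fin L → Fin D → Ω → ℝ)
    (ha : ∀ l k ω, a l k ω = ∑ j, I j l k ω * h j k ω)
    -- coordinate-wise independence of the sources
    (hIndeph : iIndepFun
      (fun (k : Fin D) ω => fun j => h j k ω) μ) :
    ∀ l n : Fin L, l ≠ n →
      variance (fun ω => (1 / (D : ℝ)) * ∑ k, a l k ω * a n k ω) μ =
        (1 / (D : ℝ) ^ 2) *
            (∑ k, ∑ i, ∑ j, p i l * p j n * ∫ ω, (h i k ω) ^ 2 * (h j k ω) ^ 2 ∂μ)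
          - (1 / (D : ℝ)) * (∑ j, p j l * p j n) ^ 2 :=
  variance_normalized_correlation_general μ J L D hD h hmeas hmom hcorr I hImeas hI01 hIsum p hEI
    hIndepI hIndepIh a ha hIndeph
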